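/- Let 1 ≤ ℓ < n and 2 ≤ M ≤ 2^n, and let S be a uniformly random M-element subset of {0,1}^ℓ × {0,1}^{n−ℓ}. For y ∈ {0,1}^{n−ℓ}, let c_y(S) := |{ x ∈ {0,1}^ℓ : (x,y) ∈ S }|. When the last n−ℓ qubits of the subset-phase state |ψ_{f,S}⟩ (for any f) are measured in the computational basis, outcome y occurs with probability c_y(S)/M, and the post-measurement state on the first ℓ qubits is a computational basis state (up to sign) if and only if c_y(S) = 1. Moreover, E_S[ (1/M) ∑_{y : c_y(S) ≥ 2} c_y(S) ] ≤ (M−1)·(2^ℓ − 1)/(2^n − 1); that is, in expectation over S, the probability that the measurement fails to collapse the first ℓ qubits to a computational basis state is at most (M−1)(2^ℓ−1)/(2^n−1). -/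

import Mathlib

open scoped BigOperators ComplexOrder

namespace DT

noncomputable section

abbrev Bits (k : ℕ) := Fin k → Bool

/-- Trace norm of a complex square matrix: the sum of its singular values,
computed as the trace of `√(Xᴴ X)`. -/
def traceNorm {ι : Type*} [Fintype ι] [DecidableEq ι] (X : Matrix ι ι ℂ) : ℝ :=
  (((Matrix.posSemidef_conjTranspose_mul_self X).isHermitian.eigenvectorUnitary.1 *
      Matrix.diagonal (((↑) : ℝ → ℂ) ∘ (√·) ∘ (Matrix.posSemidef_conjTranspose_mul_self X).isHermitian.eigenvalues) *
      (star (Matrix.posSemidef_conjTranspose_mul_self X).isHermitian.eigenvectorUnitary :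
        Matrix ι ι ℂ)).trace).re

/-- `t`-fold tensor (Kronecker) power of a square matrix. -/
def tpow {ι : Type*} (t : ℕ) (M : Matrix ι ι ℂ) : Matrix (Fin t → ι) (Fin t → ι) ℂ :=
  Matrix.of fun x y => ∏ i, M (x i) (y i)

/-- Outer product `|ψ⟩⟨ψ|`. -/
def outer {ι : Type*} (ψ : ι → ℂ) : Matrix ι ι ℂ :=
  Matrix.of fun x y => ψ x * (starRingEnd ℂ) (ψ y)

/-- Orthogonal projector onto the symmetric subspace of `(ℂ^ι)^{⊗ t}`. -/
def symProj (ι : Type*) [DecidableEq ι] (t : ℕ) : Matrix (Fin t → ι) (Fin t → ι) ℂ :=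
  (t.factorial : ℂ)⁻¹ • ∑ σ : Equiv.Perm (Fin t),
    Matrix.of fun x y => if x = y ∘ σ then (1 : ℂ) else 0

/-- `t`-th moment operator of a Haar random state on `ℂ^ι`. -/
def haarMoment (ι : Type*) [Fintype ι] [DecidableEq ι] (t : ℕ) :
    Matrix (Fin t → ι) (Fin t → ι) ℂ :=
  ((Fintype.card ι + t - 1).choose t : ℂ)⁻¹ • symProj ι t

/-- Orthogonal projector onto `Sym^t(S)`, the symmetric subspace of `t` copies of
the span of the computational basis vectors indexed by `S`. -/
def symProjOn {ι : Type*} [DecidableEq ι] (S : Finset ι) (t : ℕ) :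
    Matrix (Fin t → ι) (Fin t → ι) ℂ :=
  (t.factorial : ℂ)⁻¹ • ∑ σ : Equiv.Perm (Fin t),
    Matrix.of fun x y => if (∀ i, x i ∈ S) ∧ x = y ∘ σ then (1 : ℂ) else 0

/-- `(-1)^v` for a bit `v`. -/
def sgn (v : Bool) : ℂ := if v then -1 else 1

/-- Subset-phase state. -/
def subsetPhase {ι : Type*} [DecidableEq ι] (S : Finset ι) (f : ι → Bool) : ι → ℂ :=
  fun x => if x ∈ S then sgn (f x) / (Real.sqrt S.card : ℂ) else 0

/-- Subset state. -/
def subsetState {ι : Type*} [DecidableEq ι] (S : Finset ι) : ι → ℂ :=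
  subsetPhase S fun _ => false

/-- `S` is a Schmidt-patch (glued) subset: a disjoint union of `R` products of
pairwise disjoint `M`-element subsets. -/
def IsPatch {X Y : Type*} [DecidableEq X] [DecidableEq Y] (M R : ℕ) (S : Finset (X × Y)) : Prop :=
  ∃ (A : Fin R → Finset X) (B : Fin R → Finset Y),
    (∀ j, (A j).card = M) ∧ (∀ j, (B j).card = M) ∧
      (∀ i j, i ≠ j → Disjoint (A i) (A j)) ∧
      (∀ i j, i ≠ j → Disjoint (B i) (B j)) ∧
      S = Finset.univ.biUnion fun j => A j ×ˢ B j

open Classical in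
/-- The family `F_{M,R}` of Schmidt-patch subsets of `X × Y`. -/
def patchFamily (X Y : Type*) [Fintype X] [Fintype Y] [DecidableEq X] [DecidableEq Y]
    (M R : ℕ) : Finset (Finset (X × Y)) :=
  Finset.univ.filter fun S => IsPatch M R S

/-- The graph on the edges of `P` relating edges sharing a left or right endpoint;
its connected components are the bipartite components of `P`. -/
def compGraph {X Y : Type*} (P : Finset (X × Y)) : SimpleGraph {e : X × Y // e ∈ P} :=
  SimpleGraph.fromRel fun e e' => (e : X × Y).1 = (e' : X × Y).1 ∨ (e : X × Y).2 = (e' : X × Y).2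

/-- Number of bipartite components (connected components containing at least one edge). -/
def numComponents {X Y : Type*} (P : Finset (X × Y)) : ℕ :=
  Nat.card (compGraph P).ConnectedComponent

/-- Number of vertices incident to at least one edge of `P` (total unique half-strings). -/
def numVerts {X Y : Type*} [DecidableEq X] [DecidableEq Y] (P : Finset (X × Y)) : ℕ :=
  (P.image Prod.fst).card + (P.image Prod.snd).card

/-- A doubly-unique subset of `X × Y`: all first coordinates are pairwise distinct and
all second coordinates are pairwise distinct. -/
def DoublyUnique {X Y : Type*} (T : Finset (X × Y)) : Prop :=
  (∀ e ∈ T, ∀ e' ∈ T, Prod.fst e = Prod.fst e' → e = e') ∧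
    (∀ e ∈ T, ∀ e' ∈ T, Prod.snd e = Prod.snd e' → e = e')

/-- Cyclic predecessor on `Fin m`. -/
def cpred {m : ℕ} (i : Fin m) : Fin m := ⟨((i : ℕ) + (m - 1)) % m, Nat.mod_lt _ i.pos⟩

/-- Large-brick phase state on `n = 2·m·b` qubits.  The `2m` blocks of `b` bits are indexed by
`Fin m × Bool`, where `(i, false)` is block `x_{2i+1}` and `(i, true)` is block `x_{2i+2}`
of the paper; `f i` acts on blocks `(x_{2i+1}, x_{2i+2})` and `g i` acts on the preceding
overlapping pair of blocks (cyclically). -/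
def lbps (m b : ℕ) (f g : Fin m → (Bits b × Bits b) → Bool) :
    ((Fin m × Bool) → Bits b) → ℂ :=
  fun x =>
    ((∏ i : Fin m, sgn (f i (x (i, false), x (i, true)))) *
        ∏ i : Fin m, sgn (g i (x (cpred i, true), x (i, false)))) /
      (Real.sqrt (2 ^ (2 * m * b)) : ℂ)

/-- Combine retained bits `a` (on positions `P p`) and measured bits `β` into full blocks. -/
def combine {m b : ℕ} (P : Fin m × Bool → Finset (Fin b))
    (a : ∀ p, {r : Fin b // r ∈ P p} → Bool)
    (β : ∀ p, {r : Fin b // r ∉ P p} → Bool) : (Fin m × Bool) → Bits b :=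
  fun p r => if h : r ∈ P p then a p ⟨r, h⟩ else β p ⟨r, h⟩

/-- Normalized post-measurement state of a large-brick phase state on the retained positions,
for measurement outcome `β`: a brickwork phase state with restricted brick functions. -/
def postState (m b : ℕ) (f g : Fin m → (Bits b × Bits b) → Bool)
    (P : Fin m × Bool → Finset (Fin b))
    (β : ∀ p, {r : Fin b // r ∉ P p} → Bool) :
    (∀ p, {r : Fin b // r ∈ P p} → Bool) → ℂ :=
  fun a =>
    ((∏ i : Fin m, sgn (f i (combine P a β (i, false), combine P a β (i, true)))) *
        ∏ i : Fin m, sgn (g i (combine P a β (cpred i, true), combine P a β (i, false)))) /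
      (Real.sqrt (2 ^ (∑ p : Fin m × Bool, (P p).card)) : ℂ)

/-- Reduced density matrix on the first factor of a pure state on `X × Y`. -/
def reducedProd {X Y : Type*} [Fintype Y] (ψ : X × Y → ℂ) : Matrix X X ℂ :=
  Matrix.of fun x x' => ∑ y, ψ (x, y) * (starRingEnd ℂ) (ψ (x', y))

/-- Reduced density matrix of a multi-qubit pure state on the qubits in `A`. -/
def reducedOn {Q : Type*} [Fintype Q] [DecidableEq Q] (A : Finset Q)
    (ψ : (Q → Bool) → ℂ) :
    Matrix ({q : Q // q ∈ A} → Bool) ({q : Q // q ∈ A} → Bool) ℂ :=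
  Matrix.of fun a a' => ∑ c : {q : Q // q ∉ A} → Bool,
    ψ (fun q => if h : q ∈ A then a ⟨q, h⟩ else c ⟨q, h⟩) *
      (starRingEnd ℂ) (ψ fun q => if h : q ∈ A then a' ⟨q, h⟩ else c ⟨q, h⟩)

/-- Ring position of a qubit of a large-brick state: qubit `r` of block `(i, s)`. -/
def qpos (m b : ℕ) (q : (Fin m × Bool) × Fin b) : ℕ :=
  (2 * (q.1.1 : ℕ) + if q.1.2 then 1 else 0) * b + (q.2 : ℕ)

/-- `A` is a contiguous arc of qubits with respect to the ring order on the `n = 2mb` qubits. -/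
def IsArc (m b : ℕ) (A : Finset ((Fin m × Bool) × Fin b)) : Prop :=
  ∃ s len : ℕ, ∀ q, q ∈ A ↔ ∃ j < len, qpos m b q % (2 * m * b) = (s + j) % (2 * m * b)

/-- Schmidt-patch subset-phase state determined by patches `A_j × B_j` and phase function `f`. -/
def spState {X Y : Type*} [DecidableEq X] [DecidableEq Y] (R M : ℕ)
    (A : Fin R → Finset X) (B : Fin R → Finset Y)
    (f : X × Y → Bool) : X × Y → ℂ :=
  fun e => if ∃ j, e.1 ∈ A j ∧ e.2 ∈ B j then sgn (f e) / ((M : ℂ) * (Real.sqrt R : ℂ)) else 0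


section AuxSPMC

open Finset

set_option linter.unusedSectionVars false

variable {X Y : Type*} [Fintype X] [Fintype Y] [DecidableEq X] [DecidableEq Y]

lemma card_fiber {X Y : Type*} [Fintype X] [DecidableEq X] [DecidableEq Y]
    (S : Finset (X × Y)) (y : Y) :
    (Finset.univ.filter fun x : X => (x, y) ∈ S).card = (S.filter fun e => e.2 = y).card := by
  apply Finset.card_bij (fun x _ => (x, y))
  · intro x hx; simp at hx ⊢; exact hx
  · intro x hx x' hx' h; exact (Prod.mk.injEq .. ▸ h).1
  · intro e he; simp at he
    exact ⟨e.1, by simp [← he.2, he.1], by simp [← he.2]⟩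

lemma card_pair_supersets {α : Type*} [Fintype α] [DecidableEq α] (M : ℕ) (hM : 2 ≤ M)
    (e e' : α) (h : e ≠ e') :
    ((Finset.powersetCard M (Finset.univ : Finset α)).filter fun S => e ∈ S ∧ e' ∈ S).card
      = (Fintype.card α - 2).choose (M - 2) := by
  have hpair : ({e, e'} : Finset α).card = 2 := Finset.card_pair h
  have key : ((Finset.powersetCard M (Finset.univ : Finset α)).filter
      fun S => e ∈ S ∧ e' ∈ S).card
      = (Finset.powersetCard (M - 2) ((Finset.univ : Finset α) \ {e, e'})).card := by
    refine Finset.card_bij' (fun S _ => S \ {e, e'}) (fun T _ => T ∪ {e, e'})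
      ?hi ?hj ?li ?ri
    case hi =>
      intro S hS
      simp only [Finset.mem_filter, Finset.mem_powersetCard] at hS
      obtain ⟨⟨hsub, hcard⟩, he, he'⟩ := hS
      have hps : ({e, e'} : Finset α) ⊆ S := by
        intro z hz; simp at hz; rcases hz with rfl | rfl <;> assumption
      rw [Finset.mem_powersetCard]
      exact ⟨Finset.sdiff_subset_sdiff hsub (le_refl _),
        by rw [Finset.card_sdiff_of_subset hps, hcard, hpair]⟩
    case hj =>
      intro T hT
      rw [Finset.mem_powersetCard] at hT
      obtain ⟨hsub, hcard⟩ := hT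
      have hdisj : Disjoint T ({e, e'} : Finset α) := by
        refine Finset.disjoint_left.2 fun z hz hz' => ?_
        have h2 := hsub hz; simp at h2; simp at hz'
        rcases hz' with rfl | rfl
        · exact h2.1 rfl
        · exact h2.2 rfl
      simp only [Finset.mem_filter, Finset.mem_powersetCard]
      refine ⟨⟨Finset.subset_univ _, ?_⟩, ?_, ?_⟩
      · rw [Finset.card_union_of_disjoint hdisj, hcard, hpair]; omega
      · simp
      · simp
    case li =>
      intro S hS
      simp only [Finset.mem_filter, Finset.mem_powersetCard] at hS
      have hps : ({e, e'} : Finset α) ⊆ S := by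
        intro z hz; simp at hz
        rcases hz with rfl | rfl
        · exact hS.2.1
        · exact hS.2.2
      exact Finset.sdiff_union_of_subset hps
    case ri =>
      intro T hT
      rw [Finset.mem_powersetCard] at hT
      have hdisj : Disjoint T ({e, e'} : Finset α) := by
        refine Finset.disjoint_left.2 fun z hz hz' => ?_
        have h2 := hT.1 hz; simp at h2; simp at hz'
        rcases hz' with rfl | rfl
        · exact h2.1 rfl
        · exact h2.2 rfl
      exact Finset.union_sdiff_cancel_right hdisj
  rw [key, Finset.card_powersetCard, Finset.card_sdiff_of_subset (Finset.subset_univ _), hpair,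
    Finset.card_univ]


lemma card_fiber_univ (y : Y) :
    ((Finset.univ : Finset (X × Y)).filter fun e => e.2 = y).card = Fintype.card X := by
  rw [← card_fiber]; simp

lemma pc_eq (S : Finset (X × Y)) :
    (∑ e ∈ S, ((S.filter fun e' => e'.2 = e.2).card - 1)) =
      ∑ y : Y, (S.filter fun e => e.2 = y).card * ((S.filter fun e => e.2 = y).card - 1) := by
  rw [← Finset.sum_fiberwise S (fun e => e.2)
      (fun e => (S.filter fun e' => e'.2 = e.2).card - 1)]
  refine Finset.sum_congr rfl fun y _ => ?_
  rw [Finset.sum_congr rfl (fun e he => ?_), Finset.sum_const, smul_eq_mul]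
  rw [(Finset.mem_filter.mp he).2]

lemma stepA (S : Finset (X × Y)) :
    (∑ y ∈ Finset.univ.filter (fun y : Y => 2 ≤ (S.filter fun e => e.2 = y).card),
        (S.filter fun e => e.2 = y).card)
      ≤ ∑ e ∈ S, ((S.filter fun e' => e'.2 = e.2).card - 1) := by
  rw [pc_eq]
  calc (∑ y ∈ Finset.univ.filter (fun y : Y => 2 ≤ (S.filter fun e => e.2 = y).card),
        (S.filter fun e => e.2 = y).card)
      ≤ ∑ y ∈ Finset.univ.filter (fun y : Y => 2 ≤ (S.filter fun e => e.2 = y).card),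
          (S.filter fun e => e.2 = y).card * ((S.filter fun e => e.2 = y).card - 1) := by
        refine Finset.sum_le_sum fun y hy => ?_
        have h2 := (Finset.mem_filter.mp hy).2
        have h3 : 1 ≤ (S.filter fun e => e.2 = y).card - 1 := by omega
        calc (S.filter fun e => e.2 = y).card
            = (S.filter fun e => e.2 = y).card * 1 := (mul_one _).symm
          _ ≤ _ := Nat.mul_le_mul_left _ h3
    _ ≤ _ := Finset.sum_le_sum_of_subset (Finset.filter_subset _ _)

lemma sum_ite_mem_univ (S : Finset (X × Y)) (P : X × Y → Prop) [DecidablePred P] :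
    (∑ e' : X × Y, (if e' ∈ S ∧ P e' then (1:ℕ) else 0)) = (S.filter P).card := by
  simp only [ite_and]
  rw [← Finset.sum_filter (fun e' => e' ∈ S), Finset.filter_univ_mem, Finset.card_filter]

lemma pc_double (S : Finset (X × Y)) :
    (∑ e ∈ S, ((S.filter fun e' => e'.2 = e.2).card - 1)) =
      ∑ e : X × Y, ∑ e' : X × Y,
        (if e ∈ S ∧ e' ∈ S ∧ e' ≠ e ∧ e'.2 = e.2 then 1 else 0) := by
  have step1 : ∀ e ∈ S, (S.filter fun e' => e'.2 = e.2).card - 1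
      = (S.filter fun e' => e' ≠ e ∧ e'.2 = e.2).card := by
    intro e he
    have h1 : (S.filter fun e' => e' ≠ e ∧ e'.2 = e.2)
        = (S.filter fun e' => e'.2 = e.2).erase e := by
      ext z; simp only [Finset.mem_filter, Finset.mem_erase]; tauto
    have hmem : e ∈ S.filter fun e' => e'.2 = e.2 := Finset.mem_filter.mpr ⟨he, rfl⟩
    rw [h1, Finset.card_erase_of_mem hmem]
  calc (∑ e ∈ S, ((S.filter fun e' => e'.2 = e.2).card - 1))
      = ∑ e ∈ S, ∑ e' : X × Y, (if e' ∈ S ∧ e' ≠ e ∧ e'.2 = e.2 then 1 else 0) := by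
        refine Finset.sum_congr rfl fun e he => ?_
        rw [step1 e he, sum_ite_mem_univ]
    _ = ∑ e : X × Y, (if e ∈ S then
          ∑ e' : X × Y, (if e' ∈ S ∧ e' ≠ e ∧ e'.2 = e.2 then (1:ℕ) else 0) else 0) := by
        rw [← Finset.sum_filter (fun e => e ∈ S), Finset.filter_univ_mem]
    _ = _ := by
        refine Finset.sum_congr rfl fun e _ => ?_
        by_cases he : e ∈ S <;> simp [he]

lemma sum_pc (M : ℕ) (hM2 : 2 ≤ M) :
    (∑ S ∈ Finset.powersetCard M (Finset.univ : Finset (X × Y)),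
        ∑ e ∈ S, ((S.filter fun e' => e'.2 = e.2).card - 1))
      = Fintype.card (X × Y) * (Fintype.card X - 1)
          * (Fintype.card (X × Y) - 2).choose (M - 2) := by
  classical
  have hpair : ∀ e e' : X × Y, e' ≠ e → e' ≠ e := fun _ _ h => h
  calc (∑ S ∈ Finset.powersetCard M (Finset.univ : Finset (X × Y)),
        ∑ e ∈ S, ((S.filter fun e' => e'.2 = e.2).card - 1))
      = ∑ S ∈ Finset.powersetCard M (Finset.univ : Finset (X × Y)),
          ∑ e : X × Y, ∑ e' : X × Y,
            (if e ∈ S ∧ e' ∈ S ∧ e' ≠ e ∧ e'.2 = e.2 then 1 else 0) :=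
        Finset.sum_congr rfl fun S _ => pc_double S
    _ = ∑ e : X × Y, ∑ e' : X × Y,
          ∑ S ∈ Finset.powersetCard M (Finset.univ : Finset (X × Y)),
            (if e ∈ S ∧ e' ∈ S ∧ e' ≠ e ∧ e'.2 = e.2 then 1 else 0) := by
        rw [Finset.sum_comm]
        exact Finset.sum_congr rfl fun e _ => Finset.sum_comm
    _ = ∑ e : X × Y, ∑ e' : X × Y,
          (if e' ≠ e ∧ e'.2 = e.2 then (Fintype.card (X × Y) - 2).choose (M - 2) else 0) := by
        refine Finset.sum_congr rfl fun e _ => Finset.sum_congr rfl fun e' _ => ?_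
        by_cases hcond : e' ≠ e ∧ e'.2 = e.2
        · rw [if_pos hcond]
          have : ∀ S : Finset (X × Y),
              (if e ∈ S ∧ e' ∈ S ∧ e' ≠ e ∧ e'.2 = e.2 then (1:ℕ) else 0)
                = if e ∈ S ∧ e' ∈ S then 1 else 0 := by
            intro S; by_cases h : e ∈ S ∧ e' ∈ S <;> simp [h, hcond.1, hcond.2]
          simp only [this]
          rw [← Finset.card_filter]
          exact card_pair_supersets M hM2 e e' (Ne.symm hcond.1)
        · rw [if_neg hcond]
          refine Finset.sum_eq_zero fun S _ => ?_
          rw [if_neg]; tauto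
    _ = ∑ e : X × Y, (Fintype.card X - 1) * (Fintype.card (X × Y) - 2).choose (M - 2) := by
        refine Finset.sum_congr rfl fun e _ => ?_
        rw [Finset.sum_ite, Finset.sum_const, Finset.sum_const_zero, add_zero, smul_eq_mul]
        congr 1
        have h1 : (Finset.univ.filter fun e' : X × Y => e' ≠ e ∧ e'.2 = e.2)
            = (Finset.univ.filter fun e' : X × Y => e'.2 = e.2).erase e := by
          ext z; simp only [Finset.mem_filter, Finset.mem_erase, Finset.mem_univ]; tauto
        have hmem : e ∈ Finset.univ.filter fun e' : X × Y => e'.2 = e.2 :=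
          Finset.mem_filter.mpr ⟨Finset.mem_univ e, rfl⟩
        rw [h1, Finset.card_erase_of_mem hmem, card_fiber_univ]
    _ = _ := by rw [Finset.sum_const, Finset.card_univ, smul_eq_mul, mul_assoc]

lemma choose_identity (N M : ℕ) (hM : 2 ≤ M) (hMN : M ≤ N) :
    N * (N - 1) * (N - 2).choose (M - 2) = M * (M - 1) * N.choose M := by
  obtain ⟨m, rfl⟩ : ∃ m, M = m + 2 := ⟨M - 2, by omega⟩
  obtain ⟨n, rfl⟩ : ∃ n, N = n + 2 := ⟨N - 2, by omega⟩
  simp only [Nat.add_sub_cancel]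
  have h1 := Nat.add_one_mul_choose_eq n m
  have h2 := Nat.add_one_mul_choose_eq (n + 1) (m + 1)
  have e1 : n + 2 - 1 = n + 1 := by omega
  have e2 : m + 2 - 1 = m + 1 := by omega
  rw [e1, e2]
  calc (n + 2) * (n + 1) * Nat.choose n m
      = (n + 2) * ((n + 1) * Nat.choose n m) := by ring
    _ = (n + 2) * (Nat.choose (n + 1) (m + 1) * (m + 1)) := by
        rw [h1]
    _ = ((n + 2) * Nat.choose (n + 1) (m + 1)) * (m + 1) := by ring
    _ = (Nat.choose (n + 2) (m + 2) * (m + 2)) * (m + 1) := by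
        rw [show m+1+1 = m+2 from rfl] at h2
        rw [h2]
    _ = (m + 2) * (m + 1) * Nat.choose (n + 2) (m + 2) := by ring

end AuxSPMC

open Classical in
/-- measuring the last `c = n - ℓ` qubits of a subset-phase state for a random
`M`-element subset: outcome `y` occurs with probability `c_y(S)/M`, the post-measurement state
is a basis state (up to sign) iff `c_y(S) = 1`, and the expected probability of failing to
collapse is at most `(M-1)(2^ℓ-1)/(2^n-1)`. -/
theorem subset_phase_measurement_collapse (a c M : ℕ) (ha : 1 ≤ a) (hc : 1 ≤ c)
    (hM2 : 2 ≤ M) (hMN : M ≤ 2 ^ (a + c)) :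
    (∀ (S : Finset (Bits a × Bits c)), S.card = M →
      ∀ (f : Bits a × Bits c → Bool) (y : Bits c),
        ((∑ x : Bits a, Complex.normSq (subsetPhase S f (x, y))) =
          ((S.filter fun e => e.2 = y).card : ℝ) / (M : ℝ)) ∧
        ((∃ (x₀ : Bits a) (ε : ℂ), (ε = 1 ∨ ε = -1) ∧
            ∀ x : Bits a,
              (Real.sqrt (((S.filter fun e => e.2 = y).card : ℝ) / (M : ℝ)) : ℂ)⁻¹ *
                  subsetPhase S f (x, y) = if x = x₀ then ε else 0) ↔
          (S.filter fun e => e.2 = y).card = 1)) ∧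
      ((Finset.powersetCard M (Finset.univ : Finset (Bits a × Bits c))).card : ℝ)⁻¹ *
          (∑ S ∈ Finset.powersetCard M (Finset.univ : Finset (Bits a × Bits c)),
            (1 / (M : ℝ)) *
              ∑ y ∈ Finset.univ.filter (fun y : Bits c =>
                  2 ≤ (S.filter fun e => e.2 = y).card),
                ((S.filter fun e => e.2 = y).card : ℝ)) ≤
        ((M : ℝ) - 1) * ((2 : ℝ) ^ a - 1) / ((2 : ℝ) ^ (a + c) - 1) := by
  classical
  have hM0 : (0:ℝ) < M := by exact_mod_cast Nat.lt_of_lt_of_le Nat.zero_lt_two hM2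
  have hsqM : (0:ℝ) < Real.sqrt M := Real.sqrt_pos.mpr hM0
  constructor
  · intro S hS f y
    have hns : ∀ v : Bool, Complex.normSq (sgn v / ((Real.sqrt M : ℝ) : ℂ)) = 1 / M := by
      intro v
      rw [Complex.normSq_div]
      have h1 : Complex.normSq (sgn v) = 1 := by cases v <;> simp [sgn]
      rw [h1, Complex.normSq_ofReal, Real.mul_self_sqrt hM0.le]
    constructor
    · calc ∑ x : Bits a, Complex.normSq (subsetPhase S f (x, y))
          = ∑ x : Bits a, (if (x, y) ∈ S then 1 / (M:ℝ) else 0) := by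
            refine Finset.sum_congr rfl fun x _ => ?_
            simp only [subsetPhase, hS]
            split_ifs with h
            · exact hns _
            · simp
        _ = ((Finset.univ.filter fun x : Bits a => (x, y) ∈ S).card : ℝ) * (1 / M) := by
            rw [Finset.sum_ite, Finset.sum_const, Finset.sum_const_zero, add_zero,
              nsmul_eq_mul]
        _ = _ := by rw [card_fiber]; ring
    · constructor
      · rintro ⟨x₀, ε, hε, hx⟩
        by_contra hk
        rcases Nat.lt_or_ge (S.filter fun e => e.2 = y).card 1 with h0 | h1
        · have hk0 : (S.filter fun e => e.2 = y).card = 0 := by omega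
          have hempty : (S.filter fun e => e.2 = y) = ∅ := Finset.card_eq_zero.mp hk0
          have hnot : (x₀, y) ∉ S := fun hmem => by
            have hmm : (x₀, y) ∈ S.filter fun e => e.2 = y :=
              Finset.mem_filter.mpr ⟨hmem, rfl⟩
            simp [hempty] at hmm
          have hthis := hx x₀
          rw [if_pos rfl] at hthis
          have hz : subsetPhase S f (x₀, y) = 0 := by simp [subsetPhase, hnot]
          rw [hz, mul_zero] at hthis
          rcases hε with rfl | rfl
          · exact one_ne_zero hthis.symm
          · simp at hthis
        · have h2 : 2 ≤ (S.filter fun e => e.2 = y).card := by omega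
          obtain ⟨e₁, he₁, e₂, he₂, hne⟩ :=
            Finset.one_lt_card.mp (by omega : 1 < (S.filter fun e => e.2 = y).card)
          have hy1 : e₁.2 = y := (Finset.mem_filter.mp he₁).2
          have hy2 : e₂.2 = y := (Finset.mem_filter.mp he₂).2
          have hfst : e₁.1 ≠ e₂.1 := fun h => hne (Prod.ext h (hy1.trans hy2.symm))
          obtain ⟨e, heF, hex⟩ : ∃ e, e ∈ (S.filter fun e => e.2 = y) ∧ e.1 ≠ x₀ := by
            by_cases h : e₁.1 = x₀
            · exact ⟨e₂, he₂, fun h2' => hfst (h.trans h2'.symm)⟩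
            · exact ⟨e₁, he₁, h⟩
          have heS : e ∈ S := (Finset.mem_filter.mp heF).1
          have hey : e.2 = y := (Finset.mem_filter.mp heF).2
          have hthis := hx e.1
          rw [if_neg hex] at hthis
          have hpe : (e.1, y) = e := Prod.ext rfl hey.symm
          have hmem : (e.1, y) ∈ S := hpe ▸ heS
          apply absurd hthis
          have hsub : subsetPhase S f (e.1, y) ≠ 0 := by
            simp only [subsetPhase, hS, if_pos hmem]
            apply div_ne_zero
            · cases f (e.1, y) <;> simp [sgn]
            · exact_mod_cast Complex.ofReal_ne_zero.mpr hsqM.ne'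
          refine mul_ne_zero ?_ hsub
          apply inv_ne_zero
          rw [Complex.ofReal_ne_zero]
          refine ne_of_gt (Real.sqrt_pos.mpr ?_)
          have : (0:ℝ) < ((S.filter fun e => e.2 = y).card : ℝ) := by
            exact_mod_cast Nat.lt_of_lt_of_le Nat.zero_lt_two h2
          positivity
      · intro h1
        obtain ⟨e, he⟩ := Finset.card_eq_one.mp h1
        have heF : e ∈ S.filter fun e' => e'.2 = y := he ▸ Finset.mem_singleton_self e
        have heS : e ∈ S := (Finset.mem_filter.mp heF).1
        have hey : e.2 = y := (Finset.mem_filter.mp heF).2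
        refine ⟨e.1, sgn (f e), by cases f e <;> simp [sgn], fun x => ?_⟩
        rw [h1]
        by_cases hx : x = e.1
        · rw [if_pos hx, hx]
          have hpe : (e.1, y) = e := Prod.ext rfl hey.symm
          rw [hpe]
          simp only [subsetPhase, hS, if_pos heS]
          have hs : Real.sqrt ((1:ℝ)/M) = (Real.sqrt M)⁻¹ := by
            rw [one_div, Real.sqrt_inv]
          push_cast
          rw [hs, Complex.ofReal_inv, inv_inv]
          have hne : ((Real.sqrt M : ℝ) : ℂ) ≠ 0 := Complex.ofReal_ne_zero.mpr hsqM.ne'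
          field_simp
        · rw [if_neg hx]
          have hnot : (x, y) ∉ S := fun hmem => hx (by
            have hmm : (x, y) ∈ S.filter fun e' => e'.2 = y :=
              Finset.mem_filter.mpr ⟨hmem, rfl⟩
            rw [he, Finset.mem_singleton] at hmm
            exact congrArg Prod.fst hmm)
          simp [subsetPhase, hnot]
  · -- expectation bound
    have hcardXY : Fintype.card (Bits a × Bits c) = 2 ^ (a + c) := by
      rw [Fintype.card_prod]
      simp [pow_add]
    have hcardX : Fintype.card (Bits a) = 2 ^ a := by simp
    set N := 2 ^ (a + c) with hN
    have hMN' : M ≤ N := hMN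
    have hN2 : 2 ≤ N := le_trans hM2 hMN'
    have hK : 0 < N.choose M := Nat.choose_pos hMN'
    have hKcard :
        (Finset.powersetCard M (Finset.univ : Finset (Bits a × Bits c))).card = N.choose M := by
      rw [Finset.card_powersetCard, Finset.card_univ, hcardXY]
    have hSb : ∀ S ∈ Finset.powersetCard M (Finset.univ : Finset (Bits a × Bits c)),
        (1 / (M:ℝ)) * ∑ y ∈ Finset.univ.filter (fun y : Bits c =>
            2 ≤ (S.filter fun e => e.2 = y).card), ((S.filter fun e => e.2 = y).card : ℝ)
          ≤ (1 / (M:ℝ)) * ((∑ e ∈ S, ((S.filter fun e' => e'.2 = e.2).card - 1) : ℕ) : ℝ) := by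
      intro S _
      refine mul_le_mul_of_nonneg_left ?_ (by positivity)
      have := stepA S
      calc (∑ y ∈ Finset.univ.filter (fun y : Bits c =>
              2 ≤ (S.filter fun e => e.2 = y).card), ((S.filter fun e => e.2 = y).card : ℝ))
          = ((∑ y ∈ Finset.univ.filter (fun y : Bits c =>
              2 ≤ (S.filter fun e => e.2 = y).card),
                (S.filter fun e => e.2 = y).card : ℕ) : ℝ) := by push_cast; rfl
        _ ≤ _ := by exact_mod_cast this
    have hsumpc := sum_pc (X := Bits a) (Y := Bits c) M hM2
    rw [hcardXY, hcardX] at hsumpc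
    have h1 : (∑ S ∈ Finset.powersetCard M (Finset.univ : Finset (Bits a × Bits c)),
        (1 / (M:ℝ)) * ∑ y ∈ Finset.univ.filter (fun y : Bits c =>
            2 ≤ (S.filter fun e => e.2 = y).card), ((S.filter fun e => e.2 = y).card : ℝ))
        ≤ (1 / (M:ℝ)) * ((N * (2 ^ a - 1) * (N - 2).choose (M - 2) : ℕ) : ℝ) := by
      calc (∑ S ∈ Finset.powersetCard M (Finset.univ : Finset (Bits a × Bits c)),
            (1 / (M:ℝ)) * ∑ y ∈ Finset.univ.filter (fun y : Bits c =>
                2 ≤ (S.filter fun e => e.2 = y).card), ((S.filter fun e => e.2 = y).card : ℝ))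
          ≤ ∑ S ∈ Finset.powersetCard M (Finset.univ : Finset (Bits a × Bits c)),
              (1 / (M:ℝ)) *
                ((∑ e ∈ S, ((S.filter fun e' => e'.2 = e.2).card - 1) : ℕ) : ℝ) :=
            Finset.sum_le_sum hSb
        _ = (1 / (M:ℝ)) * ((∑ S ∈ Finset.powersetCard M
              (Finset.univ : Finset (Bits a × Bits c)),
              ∑ e ∈ S, ((S.filter fun e' => e'.2 = e.2).card - 1) : ℕ) : ℝ) := by
            rw [← Finset.mul_sum]
            push_cast
            rfl
        _ = _ := by rw [hsumpc]
    have hidn : N * (N - 1) * (N - 2).choose (M - 2) = M * (M - 1) * N.choose M :=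
      choose_identity N M hM2 hMN'
    have c1 : ((N - 1 : ℕ) : ℝ) = (N:ℝ) - 1 := by
      have h : (1:ℕ) ≤ N := by omega
      push_cast [Nat.cast_sub h]
      ring
    have c2 : ((M - 1 : ℕ) : ℝ) = (M:ℝ) - 1 := by
      have h : (1:ℕ) ≤ M := by omega
      push_cast [Nat.cast_sub h]
      ring
    have c3 : ((2 ^ a - 1 : ℕ) : ℝ) = (2:ℝ) ^ a - 1 := by
      have h : (1:ℕ) ≤ 2 ^ a := Nat.one_le_two_pow
      push_cast [Nat.cast_sub h]
      ring
    have hR : (N:ℝ) * ((N:ℝ) - 1) * ((N - 2).choose (M - 2) : ℝ)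
        = (M:ℝ) * ((M:ℝ) - 1) * (N.choose M : ℝ) := by
      have := congrArg (fun t : ℕ => (t:ℝ)) hidn
      simpa [c1, c2] using this
    have hNcast : ((N:ℕ) : ℝ) = (2:ℝ) ^ (a + c) := by rw [hN]; push_cast; ring
    have hKne : ((N.choose M : ℕ) : ℝ) ≠ 0 := by
      exact_mod_cast hK.ne'
    have hden : (2:ℝ) ^ (a + c) - 1 ≠ 0 := by
      have : (2:ℝ) ≤ (2:ℝ) ^ (a + c) := by
        calc (2:ℝ) = ((2:ℕ):ℝ) := by norm_num
          _ ≤ ((N:ℕ):ℝ) := by exact_mod_cast hN2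
          _ = _ := hNcast
      nlinarith
    calc ((Finset.powersetCard M (Finset.univ : Finset (Bits a × Bits c))).card : ℝ)⁻¹ *
          (∑ S ∈ Finset.powersetCard M (Finset.univ : Finset (Bits a × Bits c)),
            (1 / (M : ℝ)) *
              ∑ y ∈ Finset.univ.filter (fun y : Bits c =>
                  2 ≤ (S.filter fun e => e.2 = y).card),
                ((S.filter fun e => e.2 = y).card : ℝ))
        ≤ ((N.choose M : ℕ) : ℝ)⁻¹ *
            ((1 / (M:ℝ)) * ((N * (2 ^ a - 1) * (N - 2).choose (M - 2) : ℕ) : ℝ)) := by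
          rw [hKcard]
          exact mul_le_mul_of_nonneg_left h1 (by positivity)
      _ = ((M : ℝ) - 1) * ((2 : ℝ) ^ a - 1) / ((2 : ℝ) ^ (a + c) - 1) := by
          have hMne : (M:ℝ) ≠ 0 := hM0.ne'
          have hNne1 : (N:ℝ) - 1 ≠ 0 := by
            rw [hNcast]; exact hden
          rw [Nat.cast_mul, Nat.cast_mul, c3, ← hNcast]
          generalize hk : ((N.choose M : ℕ):ℝ) = k at hR hKne ⊢
          generalize hd : (((N-2).choose (M-2) : ℕ):ℝ) = d at hR ⊢
          generalize hn : ((N:ℕ):ℝ) = n at hR hNne1 ⊢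
          generalize hm : ((M:ℕ):ℝ) = m at hR hMne ⊢
          field_simp
          linear_combination ((2:ℝ)^a - 1) * hR

end

end DT
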